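/- arXiv:1706.07141 — 2 statements merged into one kernel-verified Lean document; each statement's English description precedes it below -/
import Mathlib

section
/- If U₀ ≤_S U₁ in the seed order, then sp(U₀) ≤ sp(U₁); that is, the space of U₀ (the least finite set of ordinals a with [id]_{U₀} ∈ j_{U₀}([a])) is at most that of U₁. -/
noncomputable section
universe u
open FirstOrder

/-- The language of set theory: a single binary relation (we reuse `Language.graph`,
which consists of exactly one binary relation symbol, interpreted as membership). -/
abbrev setLang : FirstOrder.Language := FirstOrder.Language.graph

/-- Any class of ZF sets is a structure for the language of set theory,
interpreting the binary relation as membership. -/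
instance zfMemStructure (M : Set ZFSet) : setLang.Structure M where
  funMap := fun f _ => f.elim
  RelMap := fun r v =>
    match r with
    | .adj => (v 0 : ZFSet) ∈ (v 1 : ZFSet)

/-- The universe `V` of all ZF sets, as a class. -/
def Vclass : Set ZFSet := Set.univ

/-- A class is transitive. -/
def ZTrans (M : Set ZFSet) : Prop := ∀ x ∈ M, ∀ y : ZFSet, y ∈ x → y ∈ M

/-- An inner model: a transitive class containing all the ordinals.
(All embeddings below are fully elementary, so such an `M` that is the target of an
elementary embedding of `V` automatically satisfies ZF.) -/
def IsInnerModel (M : Set ZFSet) : Prop := ZTrans M ∧ ∀ x : ZFSet, x.IsOrdinal → x ∈ M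

/-- Elementary embeddings between classes of sets (in the language of set theory). -/
abbrev Emb (V' M : Set ZFSet) := setLang.ElementaryEmbedding V' M

/-- The value of an embedding of `V` at a set. -/
def jv0 {M : Set ZFSet} (j : Emb Vclass M) (x : ZFSet) : ZFSet :=
  (j ⟨x, Set.mem_univ x⟩ : ZFSet)

/-- The pointwise image `j[a] = {j(x) : x ∈ a}` of a set under an embedding, as a set. -/
def jImage {M : Set ZFSet} (j : Emb Vclass M) (a : ZFSet) : ZFSet :=
  @ZFSet.image (jv0 j) (Classical.allZFSetDefinable _) a

/-- ZF function application: `zApp f x` is `⋃ {y : ⟨x,y⟩ ∈ f}`,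
i.e. the value `f(x)` when `f` is a function and `x` is in its domain. -/
def zApp (f x : ZFSet) : ZFSet :=
  ZFSet.sUnion (ZFSet.sep (fun y => ZFSet.pair x y ∈ f) (ZFSet.sUnion (ZFSet.sUnion f)))

/-- `f` is a function (a functional set of ordered pairs). -/
def zIsFun (f : ZFSet) : Prop :=
  (∀ p ∈ f, ∃ x y : ZFSet, p = ZFSet.pair x y) ∧
    ∀ x y y' : ZFSet, ZFSet.pair x y ∈ f → ZFSet.pair x y' ∈ f → y = y'

/-- `f` is a function with domain `d`. -/
def zFnOn (f d : ZFSet) : Prop :=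
  zIsFun f ∧ ∀ x : ZFSet, (∃ y, ZFSet.pair x y ∈ f) ↔ x ∈ d

/-- `U` is a countably complete ultrafilter over the set `A`. -/
structure IsCCUF (U A : ZFSet) : Prop where
  mem_sub : ∀ X ∈ U, X ⊆ A
  top_mem : A ∈ U
  empty_not_mem : (∅ : ZFSet) ∉ U
  superset : ∀ X Y : ZFSet, X ∈ U → X ⊆ Y → Y ⊆ A → Y ∈ U
  inter_mem : ∀ X Y : ZFSet, X ∈ U → Y ∈ U → X ∩ Y ∈ U
  ultra : ∀ X : ZFSet, X ⊆ A → X ∈ U ∨ A \ X ∈ U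
  countably_complete : ∀ f : ℕ → ZFSet, (∀ n, f n ∈ U) → ∃ x, ∀ n, x ∈ f n

/-- `U` is a principal ultrafilter over `A`. -/
def zPrincipal (U A : ZFSet) : Prop :=
  ∃ a ∈ A, U = ZFSet.sep (fun X => a ∈ X) (ZFSet.powerset A)

/-- The ultrapower of the (possibly class-sized) model `V'` by the ultrafilter `U` on `A ∈ V'`:
a transitive inner model `M`, an elementary embedding `j : V' → M`, and a seed `[id]_U ∈ M`
such that `U` is the ultrafilter on `A` derived from `j` using the seed, and every element
of `M` has the form `j(f)(seed)` (Łoś). -/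
structure UltrapowerIn (V' : Set ZFSet) (U A : ZFSet) where
  M : Set ZFSet
  inner : IsInnerModel M
  sub : M ⊆ V'
  j : Emb V' M
  seed : ZFSet
  seed_mem : seed ∈ M
  derived : ∀ (X : ZFSet) (hX : X ∈ V'), X ⊆ A → (X ∈ U ↔ seed ∈ (j ⟨X, hX⟩ : ZFSet))
  los : ∀ y ∈ M, ∃ (f : ZFSet) (hf : f ∈ V'), y = zApp (j ⟨f, hf⟩ : ZFSet) seed

/-- The Ultrapower Axiom: every pair of countably complete ultrafilters admits a comparison
by internal ultrafilters: there are countably complete ultrafilters `W₀ ∈ Ult(V,U₀)` and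
`W₁ ∈ Ult(V,U₁)` whose respective internal ultrapowers agree and whose ultrapower embeddings
commute with those of `U₀` and `U₁`. -/
def UltrapowerAxiom : Prop :=
  ∀ (U₀ A₀ U₁ A₁ : ZFSet.{u}), IsCCUF U₀ A₀ → IsCCUF U₁ A₁ →
    ∀ (P₀ : UltrapowerIn Vclass U₀ A₀) (P₁ : UltrapowerIn Vclass U₁ A₁),
      ∃ (W₀ B₀ W₁ B₁ : ZFSet), W₀ ∈ P₀.M ∧ W₁ ∈ P₁.M ∧ IsCCUF W₀ B₀ ∧ IsCCUF W₁ B₁ ∧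
        ∃ (Q₀ : UltrapowerIn P₀.M W₀ B₀) (Q₁ : UltrapowerIn P₁.M W₁ B₁),
          Q₀.M = Q₁.M ∧
            ∀ x : ZFSet,
              (Q₀.j (P₀.j ⟨x, Set.mem_univ x⟩) : ZFSet) =
                (Q₁.j (P₁.j ⟨x, Set.mem_univ x⟩) : ZFSet)

/-- The tail `{β < κ : α < β}`. -/
def zTail (κ α : ZFSet) : ZFSet := ZFSet.sep (fun β => α ∈ β) κ

/-- `U` is a normal (κ-complete, nonprincipal) ultrafilter on the measurable cardinal `κ`:
a countably complete ultrafilter on `κ` containing all tails and closed under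
diagonal intersections. -/
def IsNormalUF (κ U : ZFSet) : Prop :=
  κ.IsOrdinal ∧ IsCCUF U κ ∧ (∀ α ∈ κ, zTail κ α ∈ U) ∧
    ∀ F : ZFSet, zFnOn F κ → (∀ α ∈ κ, zApp F α ∈ U) →
      ZFSet.sep (fun β => ∀ α ∈ β, β ∈ zApp F α) κ ∈ U

end

/-- The symmetric difference of two sets. -/
def zSymmDiff (a b : ZFSet) : ZFSet := (a \ b) ∪ (b \ a)

/-- The canonical wellorder of finite sets of ordinals: `a < b` iff the maximum of the
symmetric difference belongs to `b`. -/
def zCanonLT (a b : ZFSet) : Prop :=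
  ∃ m, m ∈ b ∧ m ∉ a ∧ ∀ x ∈ zSymmDiff a b, x = m ∨ x ∈ m

def zCanonLE (a b : ZFSet) : Prop := a = b ∨ zCanonLT a b

/-- `a` is a finite set of ordinals. -/
def IsFinOrdSet (a : ZFSet) : Prop := a.toSet.Finite ∧ ∀ x ∈ a, x.IsOrdinal

/-- `[a]`: the set of finite sets of ordinals canonically below `a`. -/
def zPred (a : ZFSet) : ZFSet :=
  ZFSet.sep (fun b => IsFinOrdSet b ∧ zCanonLT b a) (ZFSet.powerset (a ∪ ZFSet.sUnion a))

/-- `U` is a uniform countably complete ultrafilter with space `a`: a countably complete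
ultrafilter on `[a]` with `[b] ∉ U` for all `b < a`. -/
def IsUniformUF (U a : ZFSet) : Prop :=
  IsFinOrdSet a ∧ IsCCUF U (zPred a) ∧ ∀ b : ZFSet, zCanonLT b a → zPred b ∉ U

/-! If `a₁ < a₀`, let `j = j_{W₁} ∘ j_{U₁} = j_{W₀} ∘ j_{U₀}`. By uniformity `[a₁] ∉ U₀`, so the
image of the seed of `U₀` lies in `j([a₀])` but not in `j([a₁])`, while the image of the seed of
`U₁` lies in `j([a₁])`. In `V`, `[a₁]` is downward closed in `[a₀]` for the canonical order; this
is first order, so `j` transfers it, and the image of the seed of `U₀`, being below that of `U₁`,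
would lie in `j([a₁])`. -/

theorem mem_zSymmDiff {x a b : ZFSet} :
    x ∈ zSymmDiff a b ↔ (x ∈ a ∧ x ∉ b) ∨ (x ∈ b ∧ x ∉ a) := by
  simp only [zSymmDiff, ZFSet.mem_union, ZFSet.mem_sdiff]

theorem zSymmDiff_comm (a b : ZFSet) : zSymmDiff a b = zSymmDiff b a :=
  ZFSet.ext fun _ => by simp only [mem_zSymmDiff, or_comm]

theorem exists_mem_zSymmDiff_of_ne {a b : ZFSet} (h : a ≠ b) : ∃ x, x ∈ zSymmDiff a b := by
  by_contra! hab
  exact h (ZFSet.ext fun x => by have := hab x; grind [mem_zSymmDiff])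

theorem exists_max_of_isOrdinal {s : Set ZFSet} (hs : s.Finite) (hne : s.Nonempty)
    (hord : ∀ x ∈ s, x.IsOrdinal) : ∃ m ∈ s, ∀ x ∈ s, x = m ∨ x ∈ m := by
  obtain ⟨m, hm, hmax⟩ := hs.exists_maximalFor ZFSet.rank s hne
  refine ⟨m, hm, fun x hx => ?_⟩
  rcases (hord x hx).mem_trichotomous (hord m hm) with h | h | h
  · exact Or.inr h
  · exact Or.inl h
  · exact absurd (hmax hx (ZFSet.rank_lt_of_mem h).le) (ZFSet.rank_lt_of_mem h).not_ge

theorem zCanonLT_trichotomous {a b : ZFSet} (ha : IsFinOrdSet a) (hb : IsFinOrdSet b) :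
    a = b ∨ zCanonLT a b ∨ zCanonLT b a := by
  by_cases hab : a = b
  · exact Or.inl hab
  have hsub : (zSymmDiff a b).toSet ⊆ a.toSet ∪ b.toSet := fun x hx => by
    rcases mem_zSymmDiff.1 hx with h | h
    exacts [Or.inl h.1, Or.inr h.1]
  obtain ⟨m, hm, hmax⟩ := exists_max_of_isOrdinal ((ha.1.union hb.1).subset hsub)
    (exists_mem_zSymmDiff_of_ne hab)
    (fun x hx => (hsub hx).elim (ha.2 x) (hb.2 x))
  rcases mem_zSymmDiff.1 hm with h | h
  · exact Or.inr (Or.inr ⟨m, h.1, h.2, zSymmDiff_comm a b ▸ hmax⟩)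
  · exact Or.inr (Or.inl ⟨m, h.1, h.2, hmax⟩)

theorem mem_iff_mem_of_forall_mem_zSymmDiff {a b m z : ZFSet}
    (h : ∀ x ∈ zSymmDiff a b, x = m ∨ x ∈ m) (hz : ¬(z = m ∨ z ∈ m)) : z ∈ a ↔ z ∈ b := by
  by_contra hab
  exact hz (h z (by grind [mem_zSymmDiff]))

theorem zCanonLT.trans {x y a : ZFSet} (hxy : zCanonLT x y) (hya : zCanonLT y a)
    (hy : ∀ o ∈ y, o.IsOrdinal) (ha : ∀ o ∈ a, o.IsOrdinal) : zCanonLT x a := by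
  obtain ⟨m₁, hm₁y, hm₁x, hmax₁⟩ := hxy
  obtain ⟨m₂, hm₂a, hm₂y, hmax₂⟩ := hya
  -- whatever lies above both `m₁` and `m₂` is in `x` iff in `y` iff in `a`
  have above {m} (hm : m.IsOrdinal) (h₁ : m₁ = m ∨ m₁ ∈ m) (h₂ : m₂ = m ∨ m₂ ∈ m) :
      ∀ z ∈ zSymmDiff x a, z = m ∨ z ∈ m := by
    intro z hz
    by_contra hzm
    have above_of {m'} (h' : m' = m ∨ m' ∈ m) : ¬(z = m' ∨ z ∈ m') := by
      rintro (rfl | hzm')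
      · exact hzm h'
      · exact hzm (Or.inr (h'.elim (· ▸ hzm') (hm.mem_trans hzm')))
    have := mem_iff_mem_of_forall_mem_zSymmDiff hmax₁ (above_of h₁)
    have := mem_iff_mem_of_forall_mem_zSymmDiff hmax₂ (above_of h₂)
    grind [mem_zSymmDiff]
  rcases (hy m₁ hm₁y).mem_trichotomous (ha m₂ hm₂a) with h | rfl | h
  · refine ⟨m₂, hm₂a, fun hm₂x => hm₂y ?_, above (ha m₂ hm₂a) (Or.inr h) (Or.inl rfl)⟩
    refine (mem_iff_mem_of_forall_mem_zSymmDiff hmax₁ ?_).1 hm₂x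
    rintro (heq | hmem)
    exacts [ZFSet.mem_irrefl _ (heq ▸ h), ZFSet.mem_asymm h hmem]
  · exact absurd hm₁y hm₂y
  · refine ⟨m₁, (mem_iff_mem_of_forall_mem_zSymmDiff hmax₂ ?_).1 hm₁y, hm₁x,
      above (hy m₁ hm₁y) (Or.inl rfl) (Or.inr h)⟩
    rintro (heq | hmem)
    exacts [ZFSet.mem_irrefl _ (heq ▸ h), ZFSet.mem_asymm h hmem]

theorem mem_zPred {a b : ZFSet} : b ∈ zPred a ↔ IsFinOrdSet b ∧ zCanonLT b a := by
  refine ⟨fun h => (ZFSet.mem_sep.1 h).2, fun h => ZFSet.mem_sep.2 ⟨?_, h⟩⟩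
  obtain ⟨-, m, hma, hmb, hmax⟩ := h
  refine ZFSet.mem_powerset.2 fun z hz => ZFSet.mem_union.2 ?_
  by_cases hza : z ∈ a
  · exact Or.inl hza
  rcases hmax z (mem_zSymmDiff.2 (Or.inl ⟨hz, hza⟩)) with rfl | hzm
  · exact absurd hz hmb
  · exact Or.inr (ZFSet.mem_sUnion.2 ⟨m, hma, hzm⟩)

theorem zPred_subset_zPred {a b : ZFSet} (h : zCanonLT a b) (ha : IsFinOrdSet a)
    (hb : IsFinOrdSet b) : zPred a ⊆ zPred b := fun _ hx =>
  have hx := mem_zPred.1 hx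
  mem_zPred.2 ⟨hx.1, hx.2.trans h ha.2 hb.2⟩

def CanonDownClosed (A B : ZFSet) : Prop := ∀ x ∈ A, ∀ y ∈ B, zCanonLT x y → x ∈ B

theorem canonDownClosed_zPred (a : ZFSet) {b : ZFSet} (hb : IsFinOrdSet b) :
    CanonDownClosed (zPred a) (zPred b) := fun _ hx _ hy hxy =>
  have hy := mem_zPred.1 hy
  mem_zPred.2 ⟨(mem_zPred.1 hx).1, hxy.trans hy.2 hy.1.2 hb.2⟩

namespace FirstOrder.Language

theorem ElementaryEmbedding.map_mem_iff {M N : Set ZFSet} (f : Emb M N) (a b : M) :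
    (f a : ZFSet) ∈ (f b : ZFSet) ↔ (a : ZFSet) ∈ (b : ZFSet) :=
  f.map_rel adj ![a, b]

@[simp] theorem relMap_adj {M : Set ZFSet} (v : Fin 2 → M) :
    Structure.RelMap (L := setLang) adj v ↔ (v 0 : ZFSet) ∈ (v 1 : ZFSet) := Iff.rfl

variable {α : Type*} {n : ℕ}

abbrev memF (t u : setLang.Term (α ⊕ Fin n)) : setLang.BoundedFormula α n :=
  Relations.boundedFormula₂ adj t u

def zCanonLTF : setLang.BoundedFormula α 2 :=
  ∃' (memF (&2) (&1) ⊓ ∼(memF (&2) (&0)) ⊓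
    ∀' (((memF (&3) (&0) ⊓ ∼(memF (&3) (&1))) ⊔ (memF (&3) (&1) ⊓ ∼(memF (&3) (&0)))) ⟹
      (Term.bdEqual (&3) (&2) ⊔ memF (&3) (&2))))

theorem realize_zCanonLTF {M : Set ZFSet} (hM : ZTrans M) (v : α → M) (xs : Fin 2 → M) :
    zCanonLTF.Realize v xs ↔ zCanonLT (xs 0) (xs 1) := by
  simp only [zCanonLTF, BoundedFormula.realize_ex, BoundedFormula.realize_inf,
    BoundedFormula.realize_all, BoundedFormula.realize_imp, BoundedFormula.realize_sup,
    BoundedFormula.realize_not, BoundedFormula.realize_bdEqual, BoundedFormula.realize_rel₂,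
    relMap_adj, Matrix.cons_val_zero, Matrix.cons_val_one, Matrix.cons_val_fin_one]
  constructor
  · rintro ⟨m, ⟨hmy, hmx⟩, hmax⟩
    refine ⟨m, hmy, hmx, fun z hz => ?_⟩
    have hzM : z ∈ M := (mem_zSymmDiff.1 hz).elim (hM _ (xs 0).2 z ·.1) (hM _ (xs 1).2 z ·.1)
    exact (hmax ⟨z, hzM⟩ (mem_zSymmDiff.1 hz)).imp_left (congrArg Subtype.val)
  · rintro ⟨m, hmy, hmx, hmax⟩
    refine ⟨⟨m, hM _ (xs 1).2 m hmy⟩, ⟨hmy, hmx⟩, fun z hz => ?_⟩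
    exact (hmax z (mem_zSymmDiff.2 hz)).imp_left Subtype.ext

def canonDownClosedF : setLang.Formula (Fin 2) :=
  ∀' ∀' ((memF (&0) (var (Sum.inl 0)) ⊓ memF (&1) (var (Sum.inl 1)) ⊓ zCanonLTF) ⟹
    memF (&0) (var (Sum.inl 1)))

theorem realize_canonDownClosedF {M : Set ZFSet} (hM : ZTrans M) (v : Fin 2 → M) :
    canonDownClosedF.Realize v ↔ CanonDownClosed (v 0) (v 1) := by
  simp only [canonDownClosedF, Formula.Realize, BoundedFormula.realize_all,
    BoundedFormula.realize_imp, BoundedFormula.realize_inf, BoundedFormula.realize_rel₂,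
    relMap_adj, realize_zCanonLTF hM, Matrix.cons_val_zero, Matrix.cons_val_one,
    Matrix.cons_val_fin_one]
  constructor
  · intro h x hx y hy hxy
    exact h ⟨x, hM _ (v 0).2 x hx⟩ ⟨y, hM _ (v 1).2 y hy⟩ ⟨⟨hx, hy⟩, hxy⟩
  · rintro h x y ⟨⟨hx, hy⟩, hxy⟩
    exact h x hx y hy hxy

end FirstOrder.Language

theorem CanonDownClosed.map {N : Set ZFSet} (j : Emb Vclass N) (hN : ZTrans N) {A B : ZFSet}
    (h : CanonDownClosed A B) : CanonDownClosed (jv0 j A) (jv0 j B) := by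
  open FirstOrder.Language in
  have hV : canonDownClosedF.Realize ![(⟨A, Set.mem_univ A⟩ : Vclass), ⟨B, Set.mem_univ B⟩] :=
    (realize_canonDownClosedF (fun _ _ _ _ => Set.mem_univ _) _).2 h
  exact (realize_canonDownClosedF hN _).1 ((j.map_formula canonDownClosedF _).2 hV)

theorem UltrapowerIn.map_seed_mem_map_iff {V' : Set ZFSet} {U A : ZFSet}
    (P : UltrapowerIn V' U A) {N : Set ZFSet} (f : Emb P.M N) {X : ZFSet} (hXV : X ∈ V')
    (hX : X ⊆ A) : (f ⟨P.seed, P.seed_mem⟩ : ZFSet) ∈ (f (P.j ⟨X, hXV⟩) : ZFSet) ↔ X ∈ U :=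
  (f.map_mem_iff _ _).trans (P.derived X hXV hX).symm

theorem space_le_of_seed_le_general (U₀ a₀ U₁ a₁ : ZFSet)
    (h₀ : IsUniformUF U₀ a₀) (h₁ : IsUniformUF U₁ a₁)
    (P₀ : UltrapowerIn Vclass U₀ (zPred a₀)) (P₁ : UltrapowerIn Vclass U₁ (zPred a₁))
    (W₀ B₀ W₁ B₁ : ZFSet)
    (Q₀ : UltrapowerIn P₀.M W₀ B₀) (Q₁ : UltrapowerIn P₁.M W₁ B₁)
    (hcomm : ∀ x : ZFSet,
      (Q₀.j (P₀.j ⟨x, Set.mem_univ x⟩) : ZFSet) = (Q₁.j (P₁.j ⟨x, Set.mem_univ x⟩) : ZFSet))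
    (hseed : zCanonLE (Q₀.j ⟨P₀.seed, P₀.seed_mem⟩ : ZFSet)
      (Q₁.j ⟨P₁.seed, P₁.seed_mem⟩ : ZFSet)) :
    zCanonLE a₀ a₁ := by
  by_contra hle
  have hlt : zCanonLT a₁ a₀ := by
    rcases zCanonLT_trichotomous h₀.1 h₁.1 with h | h | h
    exacts [absurd (Or.inl h) hle, absurd (Or.inr h) hle, h]
  let j : Emb Vclass Q₁.M := Q₁.j.comp P₁.j
  have hj (X : ZFSet) : jv0 j X = Q₀.j (P₀.j ⟨X, Set.mem_univ X⟩) := (hcomm X).symm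
  have hs₀ : (Q₀.j ⟨P₀.seed, P₀.seed_mem⟩ : ZFSet) ∈ jv0 j (zPred a₀) := by
    rw [hj]
    exact (P₀.map_seed_mem_map_iff Q₀.j _ subset_rfl).2 h₀.2.1.top_mem
  have hs₀' : (Q₀.j ⟨P₀.seed, P₀.seed_mem⟩ : ZFSet) ∉ jv0 j (zPred a₁) := by
    rw [hj]
    exact mt (P₀.map_seed_mem_map_iff Q₀.j _ (zPred_subset_zPred hlt h₁.1 h₀.1)).1
      (h₀.2.2 a₁ hlt)
  have hs₁ : (Q₁.j ⟨P₁.seed, P₁.seed_mem⟩ : ZFSet) ∈ jv0 j (zPred a₁) :=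
    (P₁.map_seed_mem_map_iff Q₁.j _ subset_rfl).2 h₁.2.1.top_mem
  rcases hseed with heq | hseed_lt
  · exact hs₀' (heq ▸ hs₁)
  · exact hs₀' ((canonDownClosed_zPred a₀ h₁.1).map j Q₁.inner.1 _ hs₀ _ hs₁ hseed_lt)

/-- If `U₀ ≤_S U₁` in the seed order (witnessed by a comparison `⟨W₀, W₁⟩` by internal
ultrafilters to a common model with `j_{W₀}([id]_{U₀}) ≤ j_{W₁}([id]_{U₁})` in the canonical
order), then `sp(U₀) ≤ sp(U₁)`. -/
theorem space_le_of_seed_le (U₀ a₀ U₁ a₁ : ZFSet)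
    (h₀ : IsUniformUF U₀ a₀) (h₁ : IsUniformUF U₁ a₁)
    (P₀ : UltrapowerIn Vclass U₀ (zPred a₀)) (P₁ : UltrapowerIn Vclass U₁ (zPred a₁))
    (W₀ B₀ W₁ B₁ : ZFSet) (hW₀ : W₀ ∈ P₀.M) (hW₁ : W₁ ∈ P₁.M)
    (hcc₀ : IsCCUF W₀ B₀) (hcc₁ : IsCCUF W₁ B₁)
    (Q₀ : UltrapowerIn P₀.M W₀ B₀) (Q₁ : UltrapowerIn P₁.M W₁ B₁)
    (hM : Q₀.M = Q₁.M)
    (hcomm : ∀ x : ZFSet,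
      (Q₀.j (P₀.j ⟨x, Set.mem_univ x⟩) : ZFSet) = (Q₁.j (P₁.j ⟨x, Set.mem_univ x⟩) : ZFSet))
    (hseed : zCanonLE (Q₀.j ⟨P₀.seed, P₀.seed_mem⟩ : ZFSet)
      (Q₁.j ⟨P₁.seed, P₁.seed_mem⟩ : ZFSet)) :
    zCanonLE a₀ a₁ :=
  space_le_of_seed_le_general U₀ a₀ U₁ a₁ h₀ h₁ P₀ P₁ W₀ B₀ W₁ B₁ Q₀ Q₁ hcomm hseed
end

section
/- Solovay's Lemma: if λ is a regular uncountable cardinal, ⟨S_α : α < λ⟩ is a partition of {ξ < λ : cf(ξ) = ω} into stationary sets, and j : V → M is elementary with j[λ] ∈ M, then j[λ] = {α < sup j[λ] : in M, the set j(⟨S_α⟩)_α is stationary in sup j[λ]} — i.e., j[λ] is definable in M from j(⟨S_α : α < λ⟩) and sup j[λ]. -/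
/-- `κ` is a cardinal: an ordinal onto which no smaller ordinal surjects. -/
def zIsCardinal (κ : ZFSet) : Prop :=
  κ.IsOrdinal ∧ ∀ β ∈ κ, ∀ f : ZFSet, zFnOn f β → ∃ γ ∈ κ, ∀ α ∈ β, zApp f α ≠ γ

/-- `κ` is a regular (ordinal, equivalently cardinal): no function from a smaller
ordinal into `κ` is cofinal. -/
def zRegular (κ : ZFSet) : Prop :=
  κ.IsOrdinal ∧ ∀ β ∈ κ, ∀ f : ZFSet, zFnOn f β → (∀ α ∈ β, zApp f α ∈ κ) →
    ∃ γ ∈ κ, ∀ α ∈ β, zApp f α ∈ γ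

/-- `ξ` has cofinality `ω`: there is an `ω`-sequence of elements of `ξ` cofinal in `ξ`. -/
def zCofOmega (ξ : ZFSet) : Prop :=
  ∃ f : ℕ → ZFSet, (∀ n, f n ∈ ξ) ∧ ∀ α ∈ ξ, ∃ n, α ∈ f n

def zUnbounded (C δ : ZFSet) : Prop := ∀ α ∈ δ, ∃ β ∈ C, α ∈ β

def zClosed (C δ : ZFSet) : Prop :=
  ∀ α ∈ δ, α ≠ ∅ → (∀ β ∈ α, ∃ γ, γ ∈ C ∧ γ ∈ α ∧ β ∈ γ) → α ∈ C

/-- `C` is a closed unbounded subset of `δ`. -/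
def zClub (C δ : ZFSet) : Prop := C ⊆ δ ∧ zClosed C δ ∧ zUnbounded C δ

/-- `S` is stationary in `δ`. -/
def zStationary (S δ : ZFSet) : Prop := ∀ C : ZFSet, zClub C δ → ∃ x, x ∈ S ∧ x ∈ C

/-- `S` is stationary in `δ` in the sense of the model `M` (it meets every club of `δ`
lying in `M`). -/
def zStationaryIn (M : Set ZFSet) (S δ : ZFSet) : Prop :=
  ∀ C : ZFSet, C ∈ M → zClub C δ → ∃ x, x ∈ S ∧ x ∈ C

/-!
If `β < λ`, then `j(S_β)` meets every club `C ⊆ sup j[λ]`, even one outside `M`: for `α < λ` pick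
a point of `C` between `j(α)` and some `j(g(α))`; the closure points of `g` form a club in `λ`, so
some `ξ ∈ S_β` is closed under `g`; since `cf ξ = ω`, `j` is continuous at `ξ`, hence `j(ξ)` is a
limit of points of `C` and lies in `j(S_β) ∩ C`. Thus `j(β) < sup j[λ]` and `j(S)_{j(β)} = j(S_β)`
is stationary in `M`.

Conversely, the limit points of `j[λ]` below `sup j[λ]` form a club that belongs to `M`, because
`j[λ] ∈ M`. If `j(S)_α` is stationary in `M`, it contains such a limit point `η`, which has
countable cofinality because every member of a piece of `j(S)` does. Then `η = j(ξ)` for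
`ξ = {β < λ : j(β) < η}`, this `ξ` lies in some `S_γ`, so `η ∈ j(S)_α ∩ j(S)_{j(γ)}` and the
pieces of `j(S)` being disjoint gives `α = j(γ)`.
-/

open ZFSet

attribute [local instance] Classical.allZFSetDefinable

/-! ### Pairs, functions and `ω` -/

namespace ZFSet

theorem eq_doubleton_iff {u a b : ZFSet.{u}} :
    u = {a, b} ↔ (∀ t ∈ u, t = a ∨ t = b) ∧ a ∈ u ∧ b ∈ u := by
  constructor
  · rintro rfl
    exact ⟨fun t => mem_pair.1, mem_pair.2 (Or.inl rfl), mem_pair.2 (Or.inr rfl)⟩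
  · rintro ⟨h, ha, hb⟩
    ext t
    exact ⟨fun ht => mem_pair.2 (h t ht), fun ht => (mem_pair.1 ht).elim (· ▸ ha) (· ▸ hb)⟩

theorem eq_pair_iff {p x y : ZFSet.{u}} :
    p = pair x y ↔ (∀ u ∈ p, u = {x} ∨ u = {x, y}) ∧ {x} ∈ p ∧ {x, y} ∈ p :=
  eq_doubleton_iff

theorem eq_insert_self_iff {y z : ZFSet.{u}} :
    y = insert z z ↔ (∀ t ∈ y, t ∈ z ∨ t = z) ∧ z ∈ y ∧ ∀ t ∈ z, t ∈ y := by
  constructor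
  · rintro rfl
    exact ⟨fun t ht => (mem_insert_iff.1 ht).symm, mem_insert z z, fun t => mem_insert_of_mem z⟩
  · rintro ⟨h, hz, hsub⟩
    ext t
    refine ⟨fun ht => mem_insert_iff.2 (h t ht).symm, fun ht => ?_⟩
    rcases mem_insert_iff.1 ht with rfl | ht
    exacts [hz, hsub t ht]

theorem mk_ofNat (n : ℕ) : mk (PSet.ofNat n) = (n : Ordinal).toZFSet := by
  induction n with
  | zero => simp only [Nat.cast_zero, Ordinal.toZFSet_zero]; rfl
  | succ n ih => rw [Nat.cast_succ, Ordinal.toZFSet_add_one, ← ih]; rfl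

theorem mem_omega_iff {x : ZFSet.{u}} : x ∈ omega ↔ ∃ n : ℕ, x = (n : Ordinal).toZFSet := by
  induction x using Quotient.inductionOn with
  | h x =>
    refine ⟨fun ⟨⟨n⟩, h⟩ => ⟨n, ?_⟩,
      fun ⟨n, h⟩ => ⟨⟨n⟩, Quotient.exact (h.trans (mk_ofNat n).symm)⟩⟩
    rw [← mk_ofNat]
    exact Quotient.sound h

theorem omega_induction {P : ZFSet.{u} → Prop} (h0 : P ∅)
    (hsucc : ∀ n ∈ omega, P n → P (insert n n)) : ∀ x ∈ omega, P x := by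
  intro x hx
  obtain ⟨n, rfl⟩ := mem_omega_iff.1 hx
  induction n with
  | zero => simpa [Ordinal.toZFSet_zero] using h0
  | succ n ih =>
    have hn := mem_omega_iff.2 ⟨n, rfl⟩
    rw [Nat.cast_succ, Ordinal.toZFSet_add_one]
    exact hsucc _ hn (ih hn)

theorem eq_omega_iff {w : ZFSet.{u}} : w = omega ↔
    ∅ ∈ w ∧ (∀ y ∈ w, insert y y ∈ w) ∧ ∀ y ∈ w, y = ∅ ∨ ∃ z ∈ w, y = insert z z := by
  constructor
  · rintro rfl
    refine ⟨omega_zero, fun y => omega_succ, fun y hy => ?_⟩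
    obtain ⟨n, rfl⟩ := mem_omega_iff.1 hy
    cases n with
    | zero => simp [Ordinal.toZFSet_zero]
    | succ n =>
      exact Or.inr ⟨_, mem_omega_iff.2 ⟨n, rfl⟩, by rw [Nat.cast_succ, Ordinal.toZFSet_add_one]⟩
  · rintro ⟨h0, hsucc, hpred⟩
    ext x
    refine ⟨fun hx => ?_, fun hx => omega_induction h0 (fun n _ => hsucc n) x hx⟩
    induction x using inductionOn with
    | h x ih =>
      rcases hpred x hx with rfl | ⟨z, hz, rfl⟩
      exacts [omega_zero, omega_succ (ih z (mem_insert z z) hz)]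

theorem isOrdinal_sUnion {x : ZFSet.{u}} (h : ∀ y ∈ x, y.IsOrdinal) : (⋃₀ x).IsOrdinal :=
  isOrdinal_iff_forall_mem_isOrdinal.2
    ⟨IsTransitive.sUnion' fun y hy => (h y hy).isTransitive, fun z hz => by
      obtain ⟨y, hy, hzy⟩ := mem_sUnion.1 hz
      exact (h y hy).mem hzy⟩

theorem pair_mem_map {d x y : ZFSet.{u}} {g : ZFSet.{u} → ZFSet.{u}} :
    pair x y ∈ map g d ↔ x ∈ d ∧ y = g x := by
  simp only [mem_map, pair_inj]
  exact ⟨fun ⟨z, hz, hzx, hzy⟩ => hzx ▸ ⟨hz, hzy.symm⟩, fun ⟨hx, hy⟩ => ⟨x, hx, rfl, hy.symm⟩⟩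

end ZFSet

theorem mem_zApp {f x t : ZFSet.{u}} : t ∈ zApp f x ↔ ∃ y, pair x y ∈ f ∧ t ∈ y := by
  simp only [zApp, mem_sUnion, mem_sep]
  refine ⟨fun ⟨y, ⟨_, hy⟩, ht⟩ => ⟨y, hy, ht⟩, fun ⟨y, hy, ht⟩ => ⟨y, ⟨?_, hy⟩, ht⟩⟩
  have hxy : ({x, y} : ZFSet) ∈ pair x y := by simp [pair]
  exact ⟨{x, y}, ⟨_, hy, hxy⟩, mem_pair.2 (Or.inr rfl)⟩

theorem zApp_eq_of_pair_mem {f x y : ZFSet.{u}}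
    (hf : ∀ y y', pair x y ∈ f → pair x y' ∈ f → y = y') (h : pair x y ∈ f) : zApp f x = y := by
  ext t
  rw [mem_zApp]
  exact ⟨fun ⟨y', hy', ht⟩ => hf y' y hy' h ▸ ht, fun ht => ⟨y, h, ht⟩⟩

theorem zApp_map {d x : ZFSet.{u}} {g : ZFSet.{u} → ZFSet.{u}} (hx : x ∈ d) :
    zApp (map g d) x = g x :=
  zApp_eq_of_pair_mem (fun _ _ hy hy' => (pair_mem_map.1 hy).2.trans (pair_mem_map.1 hy').2.symm)
    (pair_mem_map.2 ⟨hx, rfl⟩)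

theorem zFnOn_map (d : ZFSet.{u}) (g : ZFSet.{u} → ZFSet.{u}) : zFnOn (map g d) d := by
  refine ⟨⟨fun p hp => ?_, fun x _ _ hy hy' => ?_⟩, fun x => ?_⟩
  · obtain ⟨z, -, rfl⟩ := mem_map.1 hp
    exact ⟨z, g z, rfl⟩
  · exact (pair_mem_map.1 hy).2.trans (pair_mem_map.1 hy').2.symm
  · simp

theorem zFnOn.pair_zApp_mem {S d x : ZFSet.{u}} (hS : zFnOn S d) (hx : x ∈ d) :
    pair x (zApp S x) ∈ S := by
  obtain ⟨y, hy⟩ := (hS.2 x).2 hx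
  rwa [zApp_eq_of_pair_mem (hS.1.2 x) hy]

theorem zFnOn.forall_pair_mem_iff {S d : ZFSet.{u}} (hS : zFnOn S d)
    {P : ZFSet.{u} → ZFSet.{u} → Prop} :
    (∀ x y, pair x y ∈ S → P x y) ↔ ∀ x ∈ d, P x (zApp S x) := by
  refine ⟨fun h x hx => h x _ (hS.pair_zApp_mem hx), fun h x y hxy => ?_⟩
  rw [← zApp_eq_of_pair_mem (hS.1.2 x) hxy]
  exact h x ((hS.2 x).1 ⟨y, hxy⟩)

/-- A first-order counterpart of `zCofOmega`, whose witness is a Lean sequence `ℕ → ZFSet`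
rather than a set. -/
def IsCofinalMap (F w ξ : ZFSet.{u}) : Prop :=
  (∀ x y y', pair x y ∈ F → pair x y' ∈ F → y = y') ∧ (∀ n ∈ w, ∃ β ∈ ξ, pair n β ∈ F) ∧
    ∀ α ∈ ξ, ∃ n ∈ w, ∃ β ∈ ξ, pair n β ∈ F ∧ α ∈ β

theorem zCofOmega_iff_exists_isCofinalMap {ξ : ZFSet.{u}} :
    zCofOmega ξ ↔ ∃ F, IsCofinalMap F omega ξ := by
  have hinj : Function.Injective fun n : ℕ => (n : Ordinal.{u}).toZFSet :=
    Ordinal.toZFSet_injective.comp Nat.cast_injective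
  constructor
  · rintro ⟨f, hf, hcof⟩
    refine ⟨range fun n : ℕ => pair (n : Ordinal).toZFSet (f n), ?_, fun m hm => ?_, fun α hα => ?_⟩
    · simp only [mem_range, pair_inj]
      rintro x y y' ⟨n, rfl, rfl⟩ ⟨n', hn, rfl⟩
      rw [hinj hn]
    · obtain ⟨n, rfl⟩ := mem_omega_iff.1 hm
      exact ⟨f n, hf n, mem_range.2 ⟨n, rfl⟩⟩
    · obtain ⟨n, hn⟩ := hcof α hα
      exact ⟨_, mem_omega_iff.2 ⟨n, rfl⟩, f n, hf n, mem_range.2 ⟨n, rfl⟩, hn⟩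
  · rintro ⟨F, hfun, hdom, hcof⟩
    choose! f hf hfF using hdom
    refine ⟨fun n => f (n : Ordinal).toZFSet, fun n => hf _ (mem_omega_iff.2 ⟨n, rfl⟩), ?_⟩
    intro α hα
    obtain ⟨m, hm, β, -, hβ, hαβ⟩ := hcof α hα
    obtain ⟨n, rfl⟩ := mem_omega_iff.1 hm
    exact ⟨n, show α ∈ f _ by rwa [← hfun _ _ _ hβ (hfF _ hm)]⟩

/-! ### Regular cardinals -/

namespace zRegular

variable {lam : ZFSet.{u}}

theorem exists_bound (hreg : zRegular lam) {β : ZFSet.{u}} (hβ : β ∈ lam)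
    {g : ZFSet.{u} → ZFSet.{u}} (hg : ∀ α ∈ β, g α ∈ lam) : ∃ γ ∈ lam, ∀ α ∈ β, g α ∈ γ := by
  obtain ⟨γ, hγ, h⟩ := hreg.2 β hβ (map g β) (zFnOn_map β g) fun α hα => by
    simpa only [zApp_map hα] using hg α hα
  exact ⟨γ, hγ, fun α hα => by simpa only [zApp_map hα] using h α hα⟩

theorem exists_bound_nat (hreg : zRegular lam) (hunc : omega ∈ lam) {θ : ℕ → ZFSet.{u}}
    (hθ : ∀ n, θ n ∈ lam) : ∃ γ ∈ lam, ∀ n, θ n ∈ γ := by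
  let ofNat : ℕ → ZFSet.{u} := fun n => (n : Ordinal).toZFSet
  have hinj : Function.Injective ofNat := Ordinal.toZFSet_injective.comp Nat.cast_injective
  have hθ' : ∀ n : ℕ, θ (Function.invFun ofNat (n : Ordinal).toZFSet) = θ n := fun n =>
    congrArg θ (Function.leftInverse_invFun hinj n)
  obtain ⟨γ, hγ, h⟩ := hreg.exists_bound hunc (g := θ ∘ Function.invFun ofNat) fun m hm => by
    obtain ⟨n, rfl⟩ := mem_omega_iff.1 hm
    simpa only [Function.comp_apply, hθ'] using hθ n
  refine ⟨γ, hγ, fun n => ?_⟩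
  simpa only [Function.comp_apply, hθ'] using h _ (mem_omega_iff.2 ⟨n, rfl⟩)

theorem exists_mem_of_mem (hreg : zRegular lam) (hunc : omega ∈ lam) {α : ZFSet.{u}}
    (hα : α ∈ lam) : ∃ γ ∈ lam, α ∈ γ := by
  obtain ⟨γ, hγ, h⟩ := hreg.exists_bound_nat hunc (θ := fun _ => α) fun _ => hα
  exact ⟨γ, hγ, h 0⟩

/-- The closure point is the supremum of an `ω`-chain `θ (n + 1) > θ n, g[θ n]`. -/
theorem exists_closurePoint (hreg : zRegular lam) (hunc : omega ∈ lam)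
    {g : ZFSet.{u} → ZFSet.{u}} (hg : ∀ α ∈ lam, g α ∈ lam) {α₀ : ZFSet.{u}} (hα₀ : α₀ ∈ lam) :
    ∃ ξ ∈ lam, α₀ ∈ ξ ∧ zCofOmega ξ ∧ ∀ α ∈ ξ, g α ∈ ξ := by
  have hstep : ∀ a ∈ lam, ∃ b ∈ lam, a ∈ b ∧ ∀ α ∈ a, g α ∈ b := by
    intro a ha
    obtain ⟨γ, hγ, hgγ⟩ := hreg.exists_bound ha fun α hα => hg α (hreg.1.mem_trans hα ha)
    obtain ⟨b, hb, hab⟩ := hreg.exists_bound_nat hunc (θ := fun n => if n = 0 then a else γ)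
      fun n => by split_ifs <;> assumption
    exact ⟨b, hb, hab 0, fun α hα => (hreg.1.mem hb).mem_trans (hgγ α hα) (hab 1)⟩
  choose! step hstep_mem hstep_lt hstep_g using hstep
  set θ : ℕ → ZFSet.{u} := fun n => step^[n] α₀
  have hθsucc : ∀ n, θ (n + 1) = step (θ n) := fun n => Function.iterate_succ_apply' ..
  have hθ : ∀ n, θ n ∈ lam := fun n => by
    induction n with
    | zero => exact hα₀
    | succ n ih => exact hθsucc n ▸ hstep_mem _ ih
  have mem_sup : ∀ {α}, α ∈ ⋃₀ range θ ↔ ∃ n, α ∈ θ n := by simp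
  have hθξ : ∀ n, θ n ∈ ⋃₀ range θ := fun n => mem_sup.2 ⟨n + 1, hθsucc n ▸ hstep_lt _ (hθ n)⟩
  obtain ⟨γ, hγ, hθγ⟩ := hreg.exists_bound_nat hunc hθ
  have hξord : (⋃₀ range θ).IsOrdinal := isOrdinal_sUnion fun y hy => by
    obtain ⟨n, rfl⟩ := mem_range.1 hy
    exact hreg.1.mem (hθ n)
  have hξγ : ⋃₀ range θ ⊆ γ := fun α hα => by
    obtain ⟨n, hn⟩ := mem_sup.1 hα
    exact (hreg.1.mem hγ).mem_trans hn (hθγ n)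
  refine ⟨_, hξord.mem_of_subset_of_mem hreg.1 hξγ hγ, hθξ 0, ⟨θ, hθξ, fun α => mem_sup.1⟩,
    fun α hα => ?_⟩
  obtain ⟨n, hn⟩ := mem_sup.1 hα
  exact mem_sup.2 ⟨n + 1, hθsucc n ▸ hstep_g _ (hθ n) α hn⟩

theorem zClub_closurePoints (hreg : zRegular lam) (hunc : omega ∈ lam)
    {g : ZFSet.{u} → ZFSet.{u}} (hg : ∀ α ∈ lam, g α ∈ lam) :
    zClub (lam.sep fun ξ => ∀ α ∈ ξ, g α ∈ ξ) lam := by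
  refine ⟨fun ξ hξ => (mem_sep.1 hξ).1, fun ξ hξ _ hlim => mem_sep.2 ⟨hξ, fun α hα => ?_⟩,
    fun α hα => ?_⟩
  · obtain ⟨γ, hγ, hγξ, hαγ⟩ := hlim α hα
    exact (hreg.1.mem hξ).mem_trans ((mem_sep.1 hγ).2 α hαγ) hγξ
  · obtain ⟨ξ, hξ, hαξ, -, hgξ⟩ := hreg.exists_closurePoint hunc hg hα
    exact ⟨ξ, mem_sep.2 ⟨hξ, hgξ⟩, hαξ⟩

end zRegular

/-! ### Formulas of set theory and elementary embeddings -/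

open FirstOrder Language

@[simp]
theorem mem_Vclass (x : ZFSet.{u}) : x ∈ Vclass := Set.mem_univ x

theorem zTrans_Vclass : ZTrans Vclass.{u} := fun _ _ y _ => mem_Vclass y

/-- Formulas with free variables in `α`. A quantifier binds the new variable `none` and refers to
the outer variable `a` as `some a`; `ball a φ` and `bex a φ` quantify over the members of `a`. -/
inductive SetFormula : Type → Type 1
  | mem {α : Type} (a b : α) : SetFormula α
  | eq {α : Type} (a b : α) : SetFormula α
  | not {α : Type} (φ : SetFormula α) : SetFormula α
  | and {α : Type} (φ ψ : SetFormula α) : SetFormula α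
  | or {α : Type} (φ ψ : SetFormula α) : SetFormula α
  | imp {α : Type} (φ ψ : SetFormula α) : SetFormula α
  | all {α : Type} (φ : SetFormula (Option α)) : SetFormula α
  | ex {α : Type} (φ : SetFormula (Option α)) : SetFormula α
  | ball {α : Type} (a : α) (φ : SetFormula (Option α)) : SetFormula α
  | bex {α : Type} (a : α) (φ : SetFormula (Option α)) : SetFormula α

namespace SetFormula

@[simp]
def Holds (K : Set ZFSet.{u}) : {α : Type} → SetFormula α → (α → ZFSet.{u}) → Prop
  | _, mem a b, v => v a ∈ v b
  | _, eq a b, v => v a = v b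
  | _, not φ, v => ¬ φ.Holds K v
  | _, and φ ψ, v => φ.Holds K v ∧ ψ.Holds K v
  | _, or φ ψ, v => φ.Holds K v ∨ ψ.Holds K v
  | _, imp φ ψ, v => φ.Holds K v → ψ.Holds K v
  | _, all φ, v => ∀ x ∈ K, φ.Holds K (Option.elim' x v)
  | _, ex φ, v => ∃ x ∈ K, φ.Holds K (Option.elim' x v)
  | _, ball a φ, v => ∀ x ∈ v a, φ.Holds K (Option.elim' x v)
  | _, bex a φ, v => ∃ x ∈ v a, φ.Holds K (Option.elim' x v)

def rename : {α β : Type} → (α → β) → SetFormula α → SetFormula β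
  | _, _, f, mem a b => mem (f a) (f b)
  | _, _, f, eq a b => eq (f a) (f b)
  | _, _, f, not φ => not (φ.rename f)
  | _, _, f, and φ ψ => and (φ.rename f) (ψ.rename f)
  | _, _, f, or φ ψ => or (φ.rename f) (ψ.rename f)
  | _, _, f, imp φ ψ => imp (φ.rename f) (ψ.rename f)
  | _, _, f, all φ => all (φ.rename (Option.map f))
  | _, _, f, ex φ => ex (φ.rename (Option.map f))
  | _, _, f, ball a φ => ball (f a) (φ.rename (Option.map f))
  | _, _, f, bex a φ => bex (f a) (φ.rename (Option.map f))

variable {α : Type}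

theorem elim'_comp_map {β : Type} (x : ZFSet.{u}) (v : β → ZFSet.{u}) (f : α → β) :
    Option.elim' x v ∘ Option.map f = Option.elim' x (v ∘ f) := by
  funext o
  cases o <;> rfl

@[simp]
theorem holds_rename (K : Set ZFSet.{u}) {β : Type} (f : α → β) (φ : SetFormula α)
    (v : β → ZFSet.{u}) : (φ.rename f).Holds K v ↔ φ.Holds K (v ∘ f) := by
  induction φ generalizing β with
  | mem a b | eq a b => rfl
  | not φ ih => exact not_congr (ih f v)
  | and φ ψ ihφ ihψ => exact and_congr (ihφ f v) (ihψ f v)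
  | or φ ψ ihφ ihψ => exact or_congr (ihφ f v) (ihψ f v)
  | imp φ ψ ihφ ihψ => exact imp_congr (ihφ f v) (ihψ f v)
  | all φ ih | ex φ ih | ball a φ ih | bex a φ ih =>
    simp only [rename, Holds, ih, elim'_comp_map, Function.comp_apply]

noncomputable def memF (a b : α) : setLang.Formula α :=
  Relations.formula₂ Language.graphRel.adj (Term.var a) (Term.var b)

noncomputable def allF (φ : setLang.Formula (Option α)) : setLang.Formula α :=
  (φ.relabel (Option.elim' (Sum.inr ()) Sum.inl)).iAlls Unit

noncomputable def exF (φ : setLang.Formula (Option α)) : setLang.Formula α :=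
  (φ.relabel (Option.elim' (Sum.inr ()) Sum.inl)).iExs Unit

noncomputable def toFormula : {α : Type} → SetFormula α → setLang.Formula α
  | _, mem a b => memF a b
  | _, eq a b => Term.equal (Term.var a) (Term.var b)
  | _, not φ => φ.toFormula.not
  | _, and φ ψ => φ.toFormula ⊓ ψ.toFormula
  | _, or φ ψ => φ.toFormula ⊔ ψ.toFormula
  | _, imp φ ψ => φ.toFormula.imp ψ.toFormula
  | _, all φ => allF φ.toFormula
  | _, ex φ => exF φ.toFormula
  | _, ball a φ => allF ((memF none (some a)).imp φ.toFormula)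
  | _, bex a φ => exF (memF none (some a) ⊓ φ.toFormula)

section Realize

variable {K : Set ZFSet.{u}}

theorem realize_memF (a b : α) (v : α → K) :
    (memF a b).Realize v ↔ (v a : ZFSet) ∈ (v b : ZFSet) :=
  Formula.realize_rel₂

theorem sum_elim_comp_elim' (v : α → K) (i : Unit → K) :
    Sum.elim v i ∘ Option.elim' (Sum.inr ()) Sum.inl = Option.elim' (i ()) v := by
  funext o
  cases o <;> rfl

theorem realize_allF (φ : setLang.Formula (Option α)) (v : α → K) :
    (allF φ).Realize v ↔ ∀ x : K, φ.Realize (Option.elim' x v) := by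
  simp only [allF, Formula.realize_iAlls, Formula.realize_relabel, sum_elim_comp_elim']
  exact ⟨fun h x => h fun _ => x, fun h i => h (i ())⟩

theorem realize_exF (φ : setLang.Formula (Option α)) (v : α → K) :
    (exF φ).Realize v ↔ ∃ x : K, φ.Realize (Option.elim' x v) := by
  simp only [exF, Formula.realize_iExs, Formula.realize_relabel, sum_elim_comp_elim']
  exact ⟨fun ⟨i, h⟩ => ⟨i (), h⟩, fun ⟨x, h⟩ => ⟨fun _ => x, h⟩⟩

theorem coe_comp_elim' (x : K) (v : α → K) :
    ((↑) ∘ Option.elim' x v : Option α → ZFSet) = Option.elim' (x : ZFSet) ((↑) ∘ v) := by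
  funext o
  cases o <;> rfl

/-- Transitivity of `K` lets the bounded quantifiers range over all members, not only those
in `K`. -/
theorem realize_toFormula (hK : ZTrans K) (φ : SetFormula α) (v : α → K) :
    φ.toFormula.Realize v ↔ φ.Holds K ((↑) ∘ v) := by
  induction φ with
  | mem a b => exact realize_memF a b v
  | eq a b => exact Formula.realize_equal.trans Subtype.ext_iff
  | not φ ih => exact Formula.realize_not.trans (not_congr (ih v))
  | and φ ψ ihφ ihψ => exact Formula.realize_inf.trans (and_congr (ihφ v) (ihψ v))
  | or φ ψ ihφ ihψ => exact Formula.realize_sup.trans (or_congr (ihφ v) (ihψ v))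
  | imp φ ψ ihφ ihψ => exact Formula.realize_imp.trans (imp_congr (ihφ v) (ihψ v))
  | all φ ih => simp only [toFormula, realize_allF, ih, coe_comp_elim', Holds, Subtype.forall]
  | ex φ ih =>
    simp only [toFormula, realize_exF, ih, coe_comp_elim', Holds, Subtype.exists, exists_prop]
  | ball a φ ih =>
    simp only [toFormula, realize_allF, Formula.realize_imp, realize_memF, ih, coe_comp_elim',
      Holds, Subtype.forall]
    exact ⟨fun h x hx => h x (hK _ (v a).2 x hx) hx, fun h x _ hx => h x hx⟩
  | bex a φ ih =>
    simp only [toFormula, realize_exF, Formula.realize_inf, realize_memF, ih, coe_comp_elim',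
      Holds, Subtype.exists]
    exact ⟨fun ⟨x, _, hx, h⟩ => ⟨x, hx, h⟩, fun ⟨x, hx, h⟩ => ⟨x, hK _ (v a).2 x hx, hx, h⟩⟩

end Realize

theorem holds_comp_jv0_iff {M : Set ZFSet.{u}} (hM : ZTrans M) (j : Emb Vclass M)
    (φ : SetFormula α) (v : α → ZFSet.{u}) : φ.Holds M (jv0 j ∘ v) ↔ φ.Holds Vclass v := by
  have h := j.map_formula φ.toFormula (fun a => ⟨v a, mem_Vclass (v a)⟩)
  rw [realize_toFormula hM, realize_toFormula zTrans_Vclass] at h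
  exact h

def iff (φ ψ : SetFormula α) : SetFormula α := and (imp φ ψ) (imp ψ φ)

def isDoubleton (u a b : α) : SetFormula α :=
  and (ball u (or (eq none (some a)) (eq none (some b)))) (and (mem a u) (mem b u))

def isPair (p x y : α) : SetFormula α :=
  and (ball p (or (isDoubleton none (some x) (some x)) (isDoubleton none (some x) (some y))))
    (and (bex p (isDoubleton none (some x) (some x))) (bex p (isDoubleton none (some x) (some y))))

def pairMem (x y f : α) : SetFormula α := bex f (isPair none (some x) (some y))

/-- `∀ x y, (x, y) ∈ f → φ`, where `φ` refers to `x` as `some none` and to `y` as `none`. -/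
def allPairs (f : α) (φ : SetFormula (Option (Option α))) : SetFormula α :=
  ball f <| ball none <| ball none <| ball (some none) <|
    imp (isPair (some (some (some none))) (some none) none)
      (φ.rename (Option.elim' none (Option.elim' (some none) (some ∘ some ∘ some ∘ some))))

def isFunctional (f : α) : SetFormula α :=
  allPairs f <| allPairs (some (some f)) <|
    imp (eq (some (some (some none))) (some none)) (eq (some (some none)) none)

def isEmpty (x : α) : SetFormula α := ball x (not (eq none none))

def isSucc (y z : α) : SetFormula α :=
  and (ball y (or (mem none (some z)) (eq none (some z))))
    (and (mem z y) (ball z (mem none (some y))))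

def isOmega (w : α) : SetFormula α :=
  and (bex w (isEmpty none)) (and (ball w (bex (some w) (isSucc none (some none))))
    (ball w (or (isEmpty none) (bex (some w) (isSucc (some none) none)))))

def isOrdinal (x : α) : SetFormula α :=
  and (ball x (ball none (mem none (some (some x)))))
    (ball x (ball none (ball none (mem none (some (some none))))))

def isCofinalMap (F w ξ : α) : SetFormula α :=
  and (isFunctional F) (and (ball w (bex (some ξ) (pairMem (some none) none (some (some F)))))
    (ball ξ (bex (some w) (bex (some (some ξ))
      (and (pairMem (some none) none (some (some (some F)))) (mem (some (some none)) none))))))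

variable {K : Set ZFSet.{u}} {v : α → ZFSet.{u}}

@[simp]
theorem holds_iff {φ ψ : SetFormula α} :
    (iff φ ψ).Holds K v ↔ (φ.Holds K v ↔ ψ.Holds K v) :=
  iff_iff_implies_and_implies.symm

@[simp]
theorem holds_isDoubleton {u a b : α} : (isDoubleton u a b).Holds K v ↔ v u = {v a, v b} := by
  simp [isDoubleton, eq_doubleton_iff]

@[simp]
theorem holds_isPair {p x y : α} : (isPair p x y).Holds K v ↔ v p = pair (v x) (v y) := by
  simp [isPair, eq_pair_iff, pair_eq_singleton]

@[simp]
theorem holds_pairMem {x y f : α} : (pairMem x y f).Holds K v ↔ pair (v x) (v y) ∈ v f := by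
  simp [pairMem]

@[simp]
theorem holds_allPairs {f : α} {φ : SetFormula (Option (Option α))} :
    (allPairs f φ).Holds K v ↔
      ∀ x y, pair x y ∈ v f → φ.Holds K (Option.elim' y (Option.elim' x v)) := by
  have henv : ∀ p u x y : ZFSet.{u},
      Option.elim' y (Option.elim' x (Option.elim' u (Option.elim' p v))) ∘
        Option.elim' none (Option.elim' (some none) (some ∘ some ∘ some ∘ some)) =
      Option.elim' y (Option.elim' x v) := by
    intro p u x y
    funext o
    rcases o with _ | _ | _ <;> rfl
  simp only [allPairs, Holds, holds_isPair, holds_rename, henv, Option.elim']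
  constructor
  · intro h x y hxy
    exact h _ hxy {x, y} (by simp [pair]) x (by simp) y (by simp) rfl
  · rintro h p hp u - x - y - rfl
    exact h x y hp

@[simp]
theorem holds_isFunctional {f : α} :
    (isFunctional f).Holds K v ↔ ∀ x y y', pair x y ∈ v f → pair x y' ∈ v f → y = y' := by
  simp only [isFunctional, holds_allPairs, Option.elim', Holds]
  exact ⟨fun h x y y' hy hy' => h x y hy x y' hy' rfl,
    fun h x y hy x' y' hy' hx => h x y y' hy (hx ▸ hy')⟩

@[simp]
theorem holds_isEmpty {x : α} : (isEmpty x).Holds K v ↔ v x = ∅ := by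
  simp [isEmpty, eq_empty]

@[simp]
theorem holds_isSucc {y z : α} : (isSucc y z).Holds K v ↔ v y = insert (v z) (v z) := by
  simp [isSucc, eq_insert_self_iff]

@[simp]
theorem holds_isOmega {w : α} : (isOmega w).Holds K v ↔ v w = omega := by
  simp [isOmega, eq_omega_iff]

@[simp]
theorem holds_isOrdinal {x : α} : (isOrdinal x).Holds K v ↔ (v x).IsOrdinal := by
  simp only [isOrdinal, Holds, Option.elim']
  exact ⟨fun ⟨h1, h2⟩ => ⟨fun y hy z hz => h1 y hy z hz, fun hyz hzw hwx => h2 _ hwx _ hzw _ hyz⟩,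
    fun h => ⟨fun y hy z hz => h.isTransitive y hy hz,
      fun w hw z hz y hy => h.mem_trans' hy hz hw⟩⟩

@[simp]
theorem holds_isCofinalMap {F w ξ : α} :
    (isCofinalMap F w ξ).Holds K v ↔ IsCofinalMap (v F) (v w) (v ξ) := by
  simp [isCofinalMap, IsCofinalMap]

end SetFormula

open SetFormula

section Embedding

variable {M : Set ZFSet.{u}} (j : Emb Vclass.{u} M)

theorem jv0_mem_jv0_iff {x y : ZFSet.{u}} : jv0 j x ∈ jv0 j y ↔ x ∈ y :=
  j.map_rel Language.graphRel.adj ![⟨x, mem_Vclass x⟩, ⟨y, mem_Vclass y⟩]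

theorem jv0_isOrdinal (hM : ZTrans M) {x : ZFSet.{u}} (hx : x.IsOrdinal) :
    (jv0 j x).IsOrdinal := by
  simpa using (holds_comp_jv0_iff hM j (isOrdinal 0) ![x]).2 (by simpa using hx)

theorem jv0_pair (hM : ZTrans M) (x y : ZFSet.{u}) :
    jv0 j (pair x y) = pair (jv0 j x) (jv0 j y) := by
  simpa using (holds_comp_jv0_iff hM j (isPair 0 1 2) ![pair x y, x, y]).2 (by simp)

theorem jv0_empty (hM : ZTrans M) : jv0 j ∅ = ∅ := by
  simpa using (holds_comp_jv0_iff hM j (isEmpty 0) ![∅]).2 (by simp)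

theorem jv0_insert_self (hM : ZTrans M) (x : ZFSet.{u}) :
    jv0 j (insert x x) = insert (jv0 j x) (jv0 j x) := by
  simpa using (holds_comp_jv0_iff hM j (isSucc 0 1) ![insert x x, x]).2 (by simp)

theorem jv0_omega (hM : ZTrans M) : jv0 j omega = omega := by
  simpa using (holds_comp_jv0_iff hM j (isOmega 0) ![omega]).2 (by simp)

theorem jv0_eq_self_of_mem_omega (hM : ZTrans M) {n : ZFSet.{u}} (hn : n ∈ omega) :
    jv0 j n = n :=
  omega_induction (P := fun n => jv0 j n = n) (jv0_empty j hM)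
    (fun n _ ih => by rw [jv0_insert_self j hM, ih]) n hn

theorem jv0_functional (hM : ZTrans M) {f : ZFSet.{u}}
    (hf : ∀ x y y', pair x y ∈ f → pair x y' ∈ f → y = y') :
    ∀ x y y', pair x y ∈ jv0 j f → pair x y' ∈ jv0 j f → y = y' := by
  simpa using (holds_comp_jv0_iff hM j (isFunctional 0) ![f]).2 (by simpa using hf)

theorem zApp_jv0 (hM : ZTrans M) {f x y : ZFSet.{u}}
    (hf : ∀ x y y', pair x y ∈ f → pair x y' ∈ f → y = y') (h : pair x y ∈ f) :
    zApp (jv0 j f) (jv0 j x) = jv0 j y :=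
  zApp_eq_of_pair_mem (jv0_functional j hM hf _) (by rwa [← jv0_pair j hM, jv0_mem_jv0_iff])

theorem jv0_isCofinalMap (hM : ZTrans M) {F ξ : ZFSet.{u}} (h : IsCofinalMap F omega ξ) :
    IsCofinalMap (jv0 j F) omega (jv0 j ξ) := by
  simpa [jv0_omega j hM] using
    (holds_comp_jv0_iff hM j (isCofinalMap 0 1 2) ![F, omega, ξ]).2 (by simpa using h)

/-- Transfer a cofinal `ω`-sequence `F`: as `j` fixes every `n < ω`, the values of `j(F)` are
the `j(F(n))`. -/
theorem jv0_continuous (hM : ZTrans M) {ξ : ZFSet.{u}} (hξ : zCofOmega ξ) :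
    ∀ ρ ∈ jv0 j ξ, ∃ β ∈ ξ, ρ ∈ jv0 j β := by
  obtain ⟨F, hF⟩ := zCofOmega_iff_exists_isCofinalMap.1 hξ
  have hjF := jv0_isCofinalMap j hM hF
  intro ρ hρ
  obtain ⟨n, hn, β, -, hnβ, hρβ⟩ := hjF.2.2 ρ hρ
  obtain ⟨β', hβ', hnβ'⟩ := hF.2.1 n hn
  have hnjβ' : pair n (jv0 j β') ∈ jv0 j F := by
    rwa [← jv0_eq_self_of_mem_omega j hM hn, ← jv0_pair j hM, jv0_mem_jv0_iff]
  exact ⟨β', hβ', hjF.1 n β _ hnβ hnjβ' ▸ hρβ⟩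

theorem zCofOmega_of_mem_jv0_value (hM : ZTrans M) {S : ZFSet.{u}}
    (hS : ∀ x y, pair x y ∈ S → ∀ ξ ∈ y, zCofOmega ξ) :
    ∀ x y, pair x y ∈ jv0 j S → ∀ η ∈ y, zCofOmega η := by
  have h := (holds_comp_jv0_iff hM j (allPairs 0 (ball none (ex
    (isCofinalMap none (some (some (some (some 1)))) (some none))))) ![S, omega]).2
    (by simpa [zCofOmega_iff_exists_isCofinalMap] using hS)
  simp only [holds_allPairs, Holds, holds_isCofinalMap, Option.elim', Function.comp_apply,
    Matrix.cons_val_zero, Matrix.cons_val_one, jv0_omega j hM] at h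
  intro x y hxy η hη
  obtain ⟨F, -, hF⟩ := h x y hxy η hη
  exact zCofOmega_iff_exists_isCofinalMap.2 ⟨F, hF⟩

theorem eq_of_mem_jv0_values (hM : ZTrans M) {S : ZFSet.{u}}
    (hS : ∀ x y, pair x y ∈ S → ∀ x' y', pair x' y' ∈ S → ∀ t ∈ y, t ∈ y' → x = x') :
    ∀ x y, pair x y ∈ jv0 j S → ∀ x' y', pair x' y' ∈ jv0 j S → ∀ t ∈ y, t ∈ y' → x = x' := by
  simpa using (holds_comp_jv0_iff hM j (allPairs 0 <| allPairs (some (some 0)) <|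
    ball (some (some none)) <| imp (mem none (some none))
      (eq (some (some (some (some none)))) (some (some none)))) ![S]).2 (by simpa using hS)

end Embedding

/-- The separation axiom `M` inherits from `V` for the formula "`η` is a limit point of `a`". -/
theorem exists_limitPoints_mem {M : Set ZFSet.{u}} (j : Emb Vclass.{u} M) (hM : ZTrans M)
    {a b : ZFSet.{u}} (ha : a ∈ M) (hb : b ∈ M) :
    ∃ c ∈ M, ∀ η ∈ M, η ∈ c ↔ η ∈ b ∧ ∀ ρ ∈ η, ∃ x ∈ a, x ∈ η ∧ ρ ∈ x := by
  have h := (holds_comp_jv0_iff hM j (all <| all <| ex <| all <|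
    iff (mem none (some none)) (and (mem none (some (some none)))
      (ball none (bex (some (some (some (some none))))
        (and (mem none (some (some none))) (mem (some none) none)))))) ![]).2 (by
    simp only [Holds, holds_iff, Option.elim', mem_Vclass, true_and, forall_const]
    exact fun a b => ⟨b.sep fun η => ∀ ρ ∈ η, ∃ x ∈ a, x ∈ η ∧ ρ ∈ x, fun η => mem_sep⟩)
  simp only [Holds, holds_iff, Option.elim'] at h
  exact h a ha b hb

/-! ### Solovay's lemma -/

section Solovay

variable {lam : ZFSet.{u}} {M : Set ZFSet.{u}} (j : Emb Vclass.{u} M)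

theorem mem_jImage {a z : ZFSet.{u}} : z ∈ jImage j a ↔ ∃ x ∈ a, jv0 j x = z := mem_image

theorem mem_sUnion_jImage {ρ : ZFSet.{u}} :
    ρ ∈ ⋃₀ jImage j lam ↔ ∃ α ∈ lam, ρ ∈ jv0 j α := by
  simp only [mem_sUnion, mem_jImage]
  exact ⟨fun ⟨_, ⟨α, hα, rfl⟩, hρ⟩ => ⟨α, hα, hρ⟩, fun ⟨α, hα, hρ⟩ => ⟨_, ⟨α, hα, rfl⟩, hρ⟩⟩

theorem jv0_mem_sUnion_jImage (hreg : zRegular lam) (hunc : omega ∈ lam) {α : ZFSet.{u}}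
    (hα : α ∈ lam) : jv0 j α ∈ ⋃₀ jImage j lam := by
  obtain ⟨γ, hγ, hαγ⟩ := hreg.exists_mem_of_mem hunc hα
  exact (mem_sUnion_jImage j).2 ⟨γ, hγ, (jv0_mem_jv0_iff j).2 hαγ⟩

theorem isOrdinal_sUnion_jImage (hM : ZTrans M) (hlam : lam.IsOrdinal) :
    (⋃₀ jImage j lam).IsOrdinal :=
  isOrdinal_sUnion fun _ hx => by
    obtain ⟨α, hα, rfl⟩ := (mem_jImage j).1 hx
    exact jv0_isOrdinal j hM (hlam.mem hα)

theorem exists_mem_jv0_inter_of_zClub (hreg : zRegular lam) (hunc : omega ∈ lam)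
    (hM : ZTrans M) {T : ZFSet.{u}} (hT : zStationary T lam) (hTcof : ∀ ξ ∈ T, zCofOmega ξ)
    {C : ZFSet.{u}} (hC : zClub C (⋃₀ jImage j lam)) : ∃ x, x ∈ jv0 j T ∧ x ∈ C := by
  have hδ := isOrdinal_sUnion_jImage j hM hreg.1
  have hsel : ∀ α ∈ lam, ∃ γ ∈ lam, ∃ c ∈ C, jv0 j α ∈ c ∧ c ∈ jv0 j γ := by
    intro α hα
    obtain ⟨c, hcC, hαc⟩ := hC.2.2 _ (jv0_mem_sUnion_jImage j hreg hunc hα)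
    obtain ⟨γ, hγ, hcγ⟩ := (mem_sUnion_jImage j).1 (hC.1 hcC)
    exact ⟨γ, hγ, c, hcC, hαc, hcγ⟩
  choose! g hg c hcC hαc hcg using hsel
  obtain ⟨ξ, hξT, hξcl⟩ := hT _ (hreg.zClub_closurePoints hunc hg)
  obtain ⟨hξ, hgξ⟩ := mem_sep.1 hξcl
  obtain ⟨f, hf, -⟩ := hTcof ξ hξT
  have hjξ_ne : jv0 j ξ ≠ ∅ := fun h => notMem_empty _ (h ▸ (jv0_mem_jv0_iff j).2 (hf 0))
  refine ⟨jv0 j ξ, (jv0_mem_jv0_iff j).2 hξT,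
    hC.2.1 _ (jv0_mem_sUnion_jImage j hreg hunc hξ) hjξ_ne fun ρ hρ => ?_⟩
  obtain ⟨α, hαξ, hρα⟩ := jv0_continuous j hM (hTcof ξ hξT) ρ hρ
  have hα := hreg.1.mem_trans hαξ hξ
  exact ⟨c α, hcC α hα, (jv0_isOrdinal j hM (hreg.1.mem hξ)).mem_trans (hcg α hα)
    ((jv0_mem_jv0_iff j).2 (hgξ α hαξ)), (hδ.mem (hC.1 (hcC α hα))).mem_trans hρα (hαc α hα)⟩

noncomputable def limitPointsJImage (j : Emb Vclass.{u} M) (lam : ZFSet.{u}) : ZFSet.{u} :=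
  (⋃₀ jImage j lam).sep fun η => ∀ ρ ∈ η, ∃ x ∈ jImage j lam, x ∈ η ∧ ρ ∈ x

theorem limitPointsJImage_mem (hM : IsInnerModel M) (hlam : lam.IsOrdinal)
    (hjl : jImage j lam ∈ M) : limitPointsJImage j lam ∈ M := by
  have hδM := hM.2 _ (isOrdinal_sUnion_jImage j hM.1 hlam)
  obtain ⟨c, hcM, hc⟩ := exists_limitPoints_mem j hM.1 hjl hδM
  convert hcM using 1
  ext η
  rw [limitPointsJImage, mem_sep]
  exact ⟨fun hη => (hc η (hM.1 _ hδM η hη.1)).2 hη, fun hη => (hc η (hM.1 _ hcM η hη)).1 hη⟩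

theorem jv0_mem_limitPointsJImage (hreg : zRegular lam) (hunc : omega ∈ lam) (hM : ZTrans M)
    {ξ : ZFSet.{u}} (hξ : ξ ∈ lam) (hξcof : zCofOmega ξ) :
    jv0 j ξ ∈ limitPointsJImage j lam := by
  refine mem_sep.2 ⟨jv0_mem_sUnion_jImage j hreg hunc hξ, fun ρ hρ => ?_⟩
  obtain ⟨β, hβξ, hρβ⟩ := jv0_continuous j hM hξcof ρ hρ
  exact ⟨jv0 j β, (mem_jImage j).2 ⟨β, hreg.1.mem_trans hβξ hξ, rfl⟩,
    (jv0_mem_jv0_iff j).2 hβξ, hρβ⟩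

theorem zClub_limitPointsJImage (hreg : zRegular lam) (hunc : omega ∈ lam) (hM : ZTrans M) :
    zClub (limitPointsJImage j lam) (⋃₀ jImage j lam) := by
  have hδ := isOrdinal_sUnion_jImage j hM hreg.1
  refine ⟨fun η hη => (mem_sep.1 hη).1, fun η hη _ hlim => mem_sep.2 ⟨hη, fun ρ hρ => ?_⟩,
    fun ρ hρ => ?_⟩
  · obtain ⟨γ, hγ, hγη, hργ⟩ := hlim ρ hρ
    obtain ⟨x, hx, hxγ, hρx⟩ := (mem_sep.1 hγ).2 ρ hργ
    exact ⟨x, hx, (hδ.mem hη).mem_trans hxγ hγη, hρx⟩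
  · obtain ⟨α, hα, hρα⟩ := (mem_sUnion_jImage j).1 hρ
    obtain ⟨ξ, hξ, hαξ, hξcof, -⟩ := hreg.exists_closurePoint hunc (g := id) (fun _ h => h) hα
    exact ⟨jv0 j ξ, jv0_mem_limitPointsJImage j hreg hunc hM hξ hξcof,
      (jv0_isOrdinal j hM (hreg.1.mem hξ)).mem_trans hρα ((jv0_mem_jv0_iff j).2 hαξ)⟩

/-- The witness is `ξ = {β < λ : j(β) < η}`. -/
theorem exists_eq_jv0_of_mem_limitPointsJImage (hreg : zRegular lam) (hunc : omega ∈ lam)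
    (hM : ZTrans M) {η : ZFSet.{u}} (hη : η ∈ limitPointsJImage j lam) (hηcof : zCofOmega η) :
    ∃ ξ ∈ lam, zCofOmega ξ ∧ η = jv0 j ξ := by
  obtain ⟨hηδ, hlim⟩ := mem_sep.1 hη
  have hηord := (isOrdinal_sUnion_jImage j hM hreg.1).mem hηδ
  obtain ⟨f, hf, hfcof⟩ := hηcof
  have hsel : ∀ n, ∃ β ∈ lam, f n ∈ jv0 j β ∧ jv0 j β ∈ η := fun n => by
    obtain ⟨x, hx, hxη, hfx⟩ := hlim (f n) (hf n)
    obtain ⟨β, hβ, rfl⟩ := (mem_jImage j).1 hx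
    exact ⟨β, hβ, hfx, hxη⟩
  choose β hβ hfβ hβη using hsel
  set ξ := lam.sep fun α => jv0 j α ∈ η
  have hβξ : ∀ n, β n ∈ ξ := fun n => mem_sep.2 ⟨hβ n, hβη n⟩
  have hξβ : ∀ α ∈ ξ, ∃ n, α ∈ β n := fun α hα => by
    obtain ⟨n, hn⟩ := hfcof _ (mem_sep.1 hα).2
    exact ⟨n, (jv0_mem_jv0_iff j).1
      ((jv0_isOrdinal j hM (hreg.1.mem (hβ n))).mem_trans hn (hfβ n))⟩
  have hξord : ξ.IsOrdinal := isOrdinal_iff_forall_mem_isOrdinal.2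
    ⟨fun α hα α' hα' => mem_sep.2 ⟨hreg.1.mem_trans hα' (mem_sep.1 hα).1,
      hηord.mem_trans ((jv0_mem_jv0_iff j).2 hα') (mem_sep.1 hα).2⟩,
    fun α hα => hreg.1.mem (mem_sep.1 hα).1⟩
  obtain ⟨γ, hγ, hβγ⟩ := hreg.exists_bound_nat hunc hβ
  have hξγ : ξ ⊆ γ := fun α hα => by
    obtain ⟨n, hn⟩ := hξβ α hα
    exact (hreg.1.mem hγ).mem_trans hn (hβγ n)
  have hξcof : zCofOmega ξ := ⟨β, hβξ, hξβ⟩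
  refine ⟨ξ, hξord.mem_of_subset_of_mem hreg.1 hξγ hγ, hξcof, ?_⟩
  ext ρ
  constructor
  · intro hρ
    obtain ⟨n, hn⟩ := hfcof ρ hρ
    exact (jv0_isOrdinal j hM hξord).mem_trans
      ((jv0_isOrdinal j hM (hreg.1.mem (hβ n))).mem_trans hn (hfβ n))
      ((jv0_mem_jv0_iff j).2 (hβξ n))
  · intro hρ
    obtain ⟨α, hα, hρα⟩ := jv0_continuous j hM hξcof ρ hρ
    exact hηord.mem_trans hρα (mem_sep.1 hα).2

theorem mem_jImage_of_zStationaryIn (hreg : zRegular lam) (hunc : omega ∈ lam)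
    (hM : IsInnerModel M) (hjl : jImage j lam ∈ M) {S : ZFSet.{u}} (hS : zFnOn S lam)
    (hpieces : ∀ α ∈ lam, ∀ ξ ∈ zApp S α, zCofOmega ξ)
    (hdisj : ∀ α ∈ lam, ∀ β ∈ lam, ∀ ξ ∈ zApp S α, ξ ∈ zApp S β → α = β)
    (hcover : ∀ ξ ∈ lam, zCofOmega ξ → ∃ α ∈ lam, ξ ∈ zApp S α) {z : ZFSet.{u}}
    (hz : zStationaryIn M (zApp (jv0 j S) z) (⋃₀ jImage j lam)) : z ∈ jImage j lam := by
  obtain ⟨η, hηz, hη⟩ := hz _ (limitPointsJImage_mem j hM hreg.1 hjl)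
    (zClub_limitPointsJImage j hreg hunc hM.1)
  obtain ⟨y, hzy, hηy⟩ := mem_zApp.1 hηz
  obtain ⟨ξ, hξ, hξcof, rfl⟩ := exists_eq_jv0_of_mem_limitPointsJImage j hreg hunc hM.1 hη
    (zCofOmega_of_mem_jv0_value j hM.1 (hS.forall_pair_mem_iff.2 hpieces) z y hzy _ hηy)
  obtain ⟨γ, hγ, hξγ⟩ := hcover ξ hξ hξcof
  have hγS : pair (jv0 j γ) (jv0 j (zApp S γ)) ∈ jv0 j S := by
    rw [← jv0_pair j hM.1, jv0_mem_jv0_iff]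
    exact hS.pair_zApp_mem hγ
  have hdisj' : ∀ x y, pair x y ∈ S → ∀ x' y', pair x' y' ∈ S → ∀ t ∈ y, t ∈ y' → x = x' :=
    hS.forall_pair_mem_iff.2 fun α hα => hS.forall_pair_mem_iff.2 (hdisj α hα)
  exact (mem_jImage j).2 ⟨γ, hγ, (eq_of_mem_jv0_values j hM.1 hdisj' z y hzy _ _ hγS _ hηy
    ((jv0_mem_jv0_iff j).2 hξγ)).symm⟩

end Solovay

/-- Solovay's Lemma: if `λ` is regular uncountable, `⟨S_α : α < λ⟩` is a partition of
`{ξ < λ : cf(ξ) = ω}` into stationary sets, and `j : V → M` is elementary with `j[λ] ∈ M`,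
then `j[λ] = {α < sup j[λ] : (j(⟨S_α⟩))_α is stationary in sup j[λ] in M}`. -/
theorem solovay_lemma (lam : ZFSet) (hreg : zRegular lam) (hunc : ZFSet.omega ∈ lam)
    (S : ZFSet) (hS : zFnOn S lam)
    (hparts : ∀ α ∈ lam, ∀ ξ ∈ zApp S α, ξ ∈ lam ∧ zCofOmega ξ)
    (hdisj : ∀ α ∈ lam, ∀ β ∈ lam, α ≠ β → ∀ ξ : ZFSet, ξ ∈ zApp S α → ξ ∉ zApp S β)
    (hcover : ∀ ξ ∈ lam, zCofOmega ξ → ∃ α ∈ lam, ξ ∈ zApp S α)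
    (hstat : ∀ α ∈ lam, zStationary (zApp S α) lam)
    (M : Set ZFSet) (hM : IsInnerModel M) (j : Emb Vclass M)
    (hjl : jImage j lam ∈ M) :
    jImage j lam =
      ZFSet.sep
        (fun α => zStationaryIn M (zApp (jv0 j S) α) (ZFSet.sUnion (jImage j lam)))
        (ZFSet.sUnion (jImage j lam)) := by
  ext z
  rw [mem_sep]
  constructor
  · intro hz
    obtain ⟨β, hβ, rfl⟩ := (mem_jImage j).1 hz
    refine ⟨jv0_mem_sUnion_jImage j hreg hunc hβ, fun C _ hC => ?_⟩
    rw [zApp_jv0 j hM.1 hS.1.2 (hS.pair_zApp_mem hβ)]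
    exact exists_mem_jv0_inter_of_zClub j hreg hunc hM.1 (hstat β hβ)
      (fun ξ hξ => (hparts β hβ ξ hξ).2) hC
  · rintro ⟨-, hz⟩
    exact mem_jImage_of_zStationaryIn j hreg hunc hM hjl hS
      (fun α hα ξ hξ => (hparts α hα ξ hξ).2)
      (fun α hα β hβ ξ hξα hξβ => by_contra fun hne => hdisj α hα β hβ hne ξ hξα hξβ) hcover hz
end
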